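/- The one-gap operator L = ∂² − 2(x + 1/x)∂ and Θ = x²/2 satisfy (ad L)⁴(Θ) − 16 (ad L)²(Θ) = 0 as differential operators with rational-function coefficients, but (ad L)²(Θ) − 16 Θ ≠ 0. -/

import Mathlib

namespace AdOneGap

/-- The one-gap operator `L = ∂² - 2(x + 1/x)∂` acting pointwise on functions. -/
noncomputable def L (f : ℝ → ℝ) : ℝ → ℝ :=
  fun x => deriv (deriv f) x - 2 * (x + 1 / x) * deriv f x

/-- Multiplication by `Θ(x) = x²/2`. -/
noncomputable def Θ (f : ℝ → ℝ) : ℝ → ℝ := fun x => x ^ 2 / 2 * f x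

/-- `ad L (T) = L ∘ T - T ∘ L`, pointwise on functions. -/
noncomputable def adL (T : (ℝ → ℝ) → (ℝ → ℝ)) : (ℝ → ℝ) → (ℝ → ℝ) :=
  fun f => L (T f) - T (L f)

/-! ### Auxiliary machinery -/

/-- First-order normal form of `adL Θ`. -/
noncomputable def B (f : ℝ → ℝ) : ℝ → ℝ :=
  fun x => 2*x*deriv f x - (1+2*x^2)*f x

/-- Normal form of `adL (adL Θ)`. -/
noncomputable def Cop (f : ℝ → ℝ) : ℝ → ℝ :=
  fun x => 4 * L f x + (4+8*x^2) * f x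

/-- The derivative of `Θ f` on `{x ≠ 0}`. -/
noncomputable def vT (f : ℝ → ℝ) : ℝ → ℝ :=
  fun x => x * f x + x^2/2 * deriv f x

/-- The derivative of `B f` on `{x ≠ 0}`. -/
noncomputable def vB (f : ℝ → ℝ) : ℝ → ℝ :=
  fun x => 2*deriv f x + 2*x*deriv (deriv f) x - (4*x*f x + (1+2*x^2)*deriv f x)

/-- The derivative of `L f` on `{x ≠ 0}`. -/
noncomputable def vL (f : ℝ → ℝ) : ℝ → ℝ :=
  fun x => deriv (deriv (deriv f)) x - 2*(x+1/x)*deriv (deriv f) x - (2 - 2/x^2)*deriv f x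

/-- The derivative of `Cop f` on `{x ≠ 0}`. -/
noncomputable def vC (f : ℝ → ℝ) : ℝ → ℝ :=
  fun x => 4 * vL f x + (16*x*f x + (4+8*x^2)*deriv f x)

lemma L_apply (g : ℝ → ℝ) (x : ℝ) :
    L g x = deriv (deriv g) x - 2 * (x + 1 / x) * deriv g x := rfl

lemma B_apply (g : ℝ → ℝ) (x : ℝ) :
    B g x = 2*x*deriv g x - (1+2*x^2)*g x := rfl

lemma Cop_apply (g : ℝ → ℝ) (x : ℝ) :
    Cop g x = 4 * L g x + (4+8*x^2) * g x := rfl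

lemma Θ_apply (g : ℝ → ℝ) (x : ℝ) : Θ g x = x ^ 2 / 2 * g x := rfl

variable {f : ℝ → ℝ} {x : ℝ}

lemma smooth1 (hf : ContDiffOn ℝ (⊤ : ℕ∞) f {x | x ≠ 0}) :
    ContDiffOn ℝ (⊤ : ℕ∞) (deriv f) {x | x ≠ 0} :=
  hf.deriv_of_isOpen isOpen_ne (by simp)

lemma diff0 (hf : ContDiffOn ℝ (⊤ : ℕ∞) f {x | x ≠ 0}) (hx : x ≠ 0) :
    DifferentiableAt ℝ f x :=
  (hf.contDiffAt (isOpen_ne.mem_nhds hx)).differentiableAt (by simp)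

lemma L_smooth (hf : ContDiffOn ℝ (⊤ : ℕ∞) f {x | x ≠ 0}) :
    ContDiffOn ℝ (⊤ : ℕ∞) (L f) {x | x ≠ 0} := by
  have hq : ContDiffOn ℝ (⊤ : ℕ∞) (fun x : ℝ => 2 * (x + 1 / x)) {x | x ≠ 0} :=
    contDiffOn_const.mul (contDiffOn_id.add
      (contDiffOn_const.div contDiffOn_id fun x hx => hx))
  exact (smooth1 (smooth1 hf)).sub (hq.mul (smooth1 hf))

lemma deriv_congr_ne {g h : ℝ → ℝ} (H : ∀ y, y ≠ 0 → g y = h y) (hx : x ≠ 0) :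
    deriv g x = deriv h x := by
  apply Filter.EventuallyEq.deriv_eq
  filter_upwards [isOpen_ne.mem_nhds hx] using H

lemma L_congr_ne {g h : ℝ → ℝ} (H : ∀ y, y ≠ 0 → g y = h y) (hx : x ≠ 0) :
    L g x = L h x := by
  have h1 : ∀ y, y ≠ 0 → deriv g y = deriv h y := fun y hy => deriv_congr_ne H hy
  rw [L_apply, L_apply, deriv_congr_ne h1 hx, h1 x hx]

/-! ### HasDerivAt lemmas -/

lemma hT (hf : ContDiffOn ℝ (⊤ : ℕ∞) f {x | x ≠ 0}) (hx : x ≠ 0) :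
    HasDerivAt (Θ f) (vT f x) x := by
  have d0 := diff0 hf hx
  have h := ((hasDerivAt_pow 2 x).div_const 2).mul d0.hasDerivAt
  unfold Θ vT
  refine h.congr_deriv ?_
  push_cast; ring

lemma hT1 (hf : ContDiffOn ℝ (⊤ : ℕ∞) f {x | x ≠ 0}) (hx : x ≠ 0) :
    HasDerivAt (vT f)
      (f x + 2*x*deriv f x + x^2/2*deriv (deriv f) x) x := by
  have d0 := diff0 hf hx
  have d1 := diff0 (smooth1 hf) hx
  have h := ((hasDerivAt_id x).mul d0.hasDerivAt).add
    (((hasDerivAt_pow 2 x).div_const 2).mul d1.hasDerivAt)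
  unfold vT
  refine h.congr_deriv ?_
  simp only [id_eq]; push_cast; ring

lemma hB (hf : ContDiffOn ℝ (⊤ : ℕ∞) f {x | x ≠ 0}) (hx : x ≠ 0) :
    HasDerivAt (B f) (vB f x) x := by
  have d0 := diff0 hf hx
  have d1 := diff0 (smooth1 hf) hx
  have h := (((hasDerivAt_id x).const_mul 2).mul d1.hasDerivAt).sub
    ((((hasDerivAt_pow 2 x).const_mul 2).const_add 1).mul d0.hasDerivAt)
  unfold B vB
  refine h.congr_deriv ?_
  simp only [id_eq]; push_cast; ring

lemma hB1 (hf : ContDiffOn ℝ (⊤ : ℕ∞) f {x | x ≠ 0}) (hx : x ≠ 0) :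
    HasDerivAt (vB f)
      (4*deriv (deriv f) x + 2*x*deriv (deriv (deriv f)) x
        - 4*f x - 8*x*deriv f x - (1+2*x^2)*deriv (deriv f) x) x := by
  have d0 := diff0 hf hx
  have d1 := diff0 (smooth1 hf) hx
  have d2 := diff0 (smooth1 (smooth1 hf)) hx
  have h := ((d1.hasDerivAt.const_mul 2).add
      (((hasDerivAt_id x).const_mul 2).mul d2.hasDerivAt)).sub
    ((((hasDerivAt_id x).const_mul 4).mul d0.hasDerivAt).add
      ((((hasDerivAt_pow 2 x).const_mul 2).const_add 1).mul d1.hasDerivAt))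
  unfold vB
  refine h.congr_deriv ?_
  simp only [id_eq]; push_cast; ring

lemma hL (hf : ContDiffOn ℝ (⊤ : ℕ∞) f {x | x ≠ 0}) (hx : x ≠ 0) :
    HasDerivAt (L f) (vL f x) x := by
  have d1 := diff0 (smooth1 hf) hx
  have d2 := diff0 (smooth1 (smooth1 hf)) hx
  have hq : HasDerivAt (fun z : ℝ => z + 1 / z) (1 - 1/x^2) x := by
    have h := (hasDerivAt_id x).add
      ((hasDerivAt_const x (1:ℝ)).div (hasDerivAt_id x) hx)
    refine h.congr_deriv ?_
    simp only [id_eq]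
    field_simp
    ring
  have h := d2.hasDerivAt.sub ((hq.const_mul 2).mul d1.hasDerivAt)
  unfold L vL
  refine h.congr_deriv ?_
  ring

lemma hL1 (hf : ContDiffOn ℝ (⊤ : ℕ∞) f {x | x ≠ 0}) (hx : x ≠ 0) :
    HasDerivAt (vL f)
      (deriv (deriv (deriv (deriv f))) x - 2*(x+1/x)*deriv (deriv (deriv f)) x
        - (4 - 4/x^2)*deriv (deriv f) x - (4/x^3)*deriv f x) x := by
  have d1 := diff0 (smooth1 hf) hx
  have d2 := diff0 (smooth1 (smooth1 hf)) hx
  have d3 := diff0 (smooth1 (smooth1 (smooth1 hf))) hx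
  have hq : HasDerivAt (fun z : ℝ => 2*(z + 1 / z)) (2*(1 - 1/x^2)) x := by
    have h := ((hasDerivAt_id x).add
      ((hasDerivAt_const x (1:ℝ)).div (hasDerivAt_id x) hx)).const_mul 2
    refine h.congr_deriv ?_
    simp only [id_eq]
    field_simp
    ring
  have hr : HasDerivAt (fun z : ℝ => 2 - 2/z^2) (4/x^3) x := by
    have h := (hasDerivAt_const x (2:ℝ)).sub
      ((hasDerivAt_const x (2:ℝ)).div (hasDerivAt_pow 2 x) (pow_ne_zero 2 hx))
    refine h.congr_deriv ?_
    push_cast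
    field_simp
    ring
  have h := (d3.hasDerivAt.sub (hq.mul d2.hasDerivAt)).sub (hr.mul d1.hasDerivAt)
  unfold vL
  refine h.congr_deriv ?_
  ring

lemma hC (hf : ContDiffOn ℝ (⊤ : ℕ∞) f {x | x ≠ 0}) (hx : x ≠ 0) :
    HasDerivAt (Cop f) (vC f x) x := by
  have d0 := diff0 hf hx
  have h := ((hL hf hx).const_mul 4).add
    ((((hasDerivAt_pow 2 x).const_mul 8).const_add 4).mul d0.hasDerivAt)
  unfold Cop vC
  refine h.congr_deriv ?_
  push_cast; ring

lemma hC1 (hf : ContDiffOn ℝ (⊤ : ℕ∞) f {x | x ≠ 0}) (hx : x ≠ 0) :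
    HasDerivAt (vC f)
      (4 * (deriv (deriv (deriv (deriv f))) x - 2*(x+1/x)*deriv (deriv (deriv f)) x
          - (4 - 4/x^2)*deriv (deriv f) x - (4/x^3)*deriv f x)
        + (16*f x + 32*x*deriv f x + (4+8*x^2)*deriv (deriv f) x)) x := by
  have d0 := diff0 hf hx
  have d1 := diff0 (smooth1 hf) hx
  have h := ((hL1 hf hx).const_mul 4).add
    ((((hasDerivAt_id x).const_mul 16).mul d0.hasDerivAt).add
      ((((hasDerivAt_pow 2 x).const_mul 8).const_add 4).mul d1.hasDerivAt))
  unfold vC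
  refine h.congr_deriv ?_
  simp only [id_eq]; push_cast; ring

/-! ### The bracket computations -/

lemma step1 (hf : ContDiffOn ℝ (⊤ : ℕ∞) f {x | x ≠ 0}) :
    ∀ x, x ≠ 0 → adL Θ f x = B f x := by
  intro x hx
  have e1 : ∀ y, y ≠ 0 → deriv (Θ f) y = vT f y := fun y hy => (hT hf hy).deriv
  calc adL Θ f x = L (Θ f) x - Θ (L f) x := rfl
    _ = B f x := by
        rw [L_apply (Θ f) x, deriv_congr_ne e1 hx, e1 x hx, (hT1 hf hx).deriv]
        simp only [Θ, L, B, vT]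
        field_simp
        ring

lemma step2 (hf : ContDiffOn ℝ (⊤ : ℕ∞) f {x | x ≠ 0}) :
    ∀ x, x ≠ 0 → adL (adL Θ) f x = Cop f x := by
  intro x hx
  have e1 : ∀ y, y ≠ 0 → deriv (B f) y = vB f y := fun y hy => (hB hf hy).deriv
  calc adL (adL Θ) f x = L (adL Θ f) x - adL Θ (L f) x := rfl
    _ = L (B f) x - B (L f) x := by
        rw [L_congr_ne (step1 hf) hx, step1 (L_smooth hf) x hx]
    _ = Cop f x := by
        rw [L_apply (B f) x, deriv_congr_ne e1 hx, e1 x hx, (hB1 hf hx).deriv,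
          B_apply (L f) x, (hL hf hx).deriv]
        simp only [Cop, L, vB, vL]
        field_simp
        ring

lemma step3 (hf : ContDiffOn ℝ (⊤ : ℕ∞) f {x | x ≠ 0}) :
    ∀ x, x ≠ 0 → adL (adL (adL Θ)) f x = 16 * B f x := by
  intro x hx
  have e1 : ∀ y, y ≠ 0 → deriv (Cop f) y = vC f y := fun y hy => (hC hf hy).deriv
  have e2 : ∀ y, y ≠ 0 → deriv (L f) y = vL f y := fun y hy => (hL hf hy).deriv
  calc adL (adL (adL Θ)) f x = L (adL (adL Θ) f) x - adL (adL Θ) (L f) x := rfl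
    _ = L (Cop f) x - Cop (L f) x := by
        rw [L_congr_ne (step2 hf) hx, step2 (L_smooth hf) x hx]
    _ = 16 * B f x := by
        rw [L_apply (Cop f) x, deriv_congr_ne e1 hx, e1 x hx, (hC1 hf hx).deriv,
          Cop_apply (L f) x, L_apply (L f) x, deriv_congr_ne e2 hx, e2 x hx,
          (hL1 hf hx).deriv]
        simp only [B, L, vC, vL]
        field_simp
        ring

lemma step4 (hf : ContDiffOn ℝ (⊤ : ℕ∞) f {x | x ≠ 0}) :
    ∀ x, x ≠ 0 → adL (adL (adL (adL Θ))) f x = 16 * adL (adL Θ) f x := by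
  intro x hx
  have e0 : ∀ y, y ≠ 0 → deriv (fun z => 16 * B f z) y = 16 * vB f y :=
    fun y hy => ((hB hf hy).const_mul 16).deriv
  calc adL (adL (adL (adL Θ))) f x
      = L (adL (adL (adL Θ)) f) x - adL (adL (adL Θ)) (L f) x := rfl
    _ = L (fun z => 16 * B f z) x - 16 * B (L f) x := by
        rw [L_congr_ne (step3 hf) hx, step3 (L_smooth hf) x hx]
    _ = 16 * Cop f x := by
        rw [L_apply (fun z => 16 * B f z) x, deriv_congr_ne e0 hx, e0 x hx,
          ((hB1 hf hx).const_mul 16).deriv,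
          B_apply (L f) x, (hL hf hx).deriv]
        simp only [Cop, L, vB, vL]
        field_simp
        ring
    _ = 16 * adL (adL Θ) f x := by rw [step2 hf x hx]

/-- `(ad L)⁴(Θ) = 16 (ad L)²(Θ)` as differential operators away from `x = 0`,
while `(ad L)²(Θ) ≠ 16 Θ`. -/
theorem one_gap_ad_condition :
    (∀ f : ℝ → ℝ, ContDiffOn ℝ (⊤ : ℕ∞) f {x | x ≠ 0} → ∀ x : ℝ, x ≠ 0 →
        adL (adL (adL (adL Θ))) f x = 16 * adL (adL Θ) f x) ∧
      ¬ (∀ f : ℝ → ℝ, ContDiffOn ℝ (⊤ : ℕ∞) f {x | x ≠ 0} → ∀ x : ℝ, x ≠ 0 →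
        adL (adL Θ) f x = 16 * Θ f x) := by
  constructor
  · intro f hf x hx
    exact step4 hf x hx
  · intro H
    have h := H (fun _ => 1) contDiffOn_const 1 one_ne_zero
    rw [step2 contDiffOn_const 1 one_ne_zero] at h
    simp [Cop, L, Θ, deriv_const'] at h
    norm_num at h

end AdOneGap
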